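/- arXiv:1611.03955 — 3 statements merged into one kernel-verified Lean document; each statement's English description precedes it below -/
import Mathlib

section
/- Let K be a simplicial complex in ℝⁿ such that every n-simplex σ satisfies diam(σ) ≤ C·γ_σ, where γ_σ is the inradius of σ. Then for any vertex v of K, the number of n-simplices of K containing v is bounded by a constant depending only on n and C (independent of K and v). -/
/-!
Rescale every n-simplex `σ` through `v` by the homothety of centre `v` and ratio `1 / diam σ`.
The images lie in the unit ball around `v`, and by shape regularity each contains a ball of
radius `1 / (2C)`. Two images overlap only in a null set: if `diam σ ≤ diam τ`, blowing the
overlap back up by `diam σ` lands, as `τ` is star-shaped about `v`, in `σ ∩ τ`, the convex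
hull of at most `n` points. Comparing volumes, at most `(2C)ⁿ` simplices contain `v`.
-/

attribute [local instance] Classical.propDecidable

/-- The inradius of a set: the supremum of radii of closed balls contained in it. -/
noncomputable def inradius {n : ℕ} (s : Set (EuclideanSpace ℝ (Fin n))) : ℝ :=
  sSup {r : ℝ | 0 ≤ r ∧ ∃ x, Metric.closedBall x r ⊆ s}

open Metric MeasureTheory Measure Module Set AffineMap Function
open scoped ENNReal

section Packing

variable {E : Type*} [NormedAddCommGroup E] [NormedSpace ℝ E]

theorem StarConvex.homothety_image_subset {s : Set E} {v : E} (hs : StarConvex ℝ v s) {t : ℝ}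
    (ht₀ : 0 ≤ t) (ht₁ : t ≤ 1) : homothety v t '' s ⊆ s := by
  rintro _ ⟨x, hx, rfl⟩
  rw [homothety_apply, vsub_eq_sub, vadd_eq_add, add_comm]
  exact hs.add_smul_sub_mem hx ht₀ ht₁

theorem homothety_inv_image_subset_closedBall {s : Set E} {v : E} {r : ℝ} (hr : 0 < r)
    (hs : s ⊆ closedBall v r) : homothety v r⁻¹ '' s ⊆ closedBall v 1 := by
  rintro _ ⟨x, hx, rfl⟩
  rw [mem_closedBall, dist_homothety_center, Real.norm_eq_abs, abs_inv, abs_of_pos hr,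
    dist_comm, inv_mul_le_one₀ hr]
  exact hs hx

theorem diam_convexHull_pos {s : Finset E} (hs : 1 < s.card) :
    0 < diam (convexHull ℝ (s : Set E)) := by
  rw [convexHull_diam]
  exact diam_pos (Finset.one_lt_card_iff_nontrivial.1 hs) s.finite_toSet.isBounded

variable [MeasurableSpace E] [BorelSpace E] [FiniteDimensional ℝ E] (μ : Measure E)
  [μ.IsAddHaarMeasure]

theorem addHaar_convexHull_eq_zero {A : Finset E} (hA : A.card ≤ finrank ℝ E) :
    μ (convexHull ℝ (A : Set E)) = 0 := by
  classical
  rcases A.eq_empty_or_nonempty with rfl | hne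
  · simp
  obtain ⟨m, hm⟩ : ∃ m, A.card = m + 1 := ⟨A.card - 1, by have := hne.card_pos; omega⟩
  have hspan : affineSpan ℝ (A : Set E) ≠ ⊤ := by
    intro h
    have hle := finrank_vectorSpan_image_finset_le ℝ id A hm
    rw [Finset.image_id, ← direction_affineSpan, h, AffineSubspace.direction_top,
      finrank_top] at hle
    omega
  exact measure_mono_null (convexHull_subset_affineSpan _) (addHaar_affineSubspace μ _ hspan)

theorem ofReal_pow_mul_addHaar_closedBall_le_addHaar_homothety_inv_image {s : Set E} {v x : E}
    {c r : ℝ} (hc : 0 ≤ c) (hr : 0 < r) (hball : closedBall x (c * r) ⊆ s) :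
    ENNReal.ofReal (c ^ finrank ℝ E) * μ (closedBall 0 1) ≤ μ (homothety v r⁻¹ '' s) := by
  calc ENNReal.ofReal (c ^ finrank ℝ E) * μ (closedBall 0 1)
      = ENNReal.ofReal |(r⁻¹) ^ finrank ℝ E| * μ (closedBall x (c * r)) := by
        rw [addHaar_closedBall' μ x (by positivity), ← mul_assoc,
          ← ENNReal.ofReal_mul (abs_nonneg _), abs_of_pos (by positivity), ← mul_pow,
          mul_comm c, inv_mul_cancel_left₀ hr.ne']
    _ ≤ μ (homothety v r⁻¹ '' s) := by
        rw [addHaar_image_homothety]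
        gcongr

theorem aedisjoint_homothety_inv_image {s t : Set E} {v : E} (hs : StarConvex ℝ v s)
    (ht : StarConvex ℝ v t) (hst : AEDisjoint μ s t) {a b : ℝ} (ha : 0 < a) (hab : a ≤ b) :
    AEDisjoint μ (homothety v a⁻¹ '' s) (homothety v b⁻¹ '' t) := by
  have himage :
      homothety v a '' (homothety v a⁻¹ '' s ∩ homothety v b⁻¹ '' t) ⊆ s ∩ t := by
    refine (image_inter_subset _ _ _).trans (inter_subset_inter ?_ ?_) <;>
      simp_rw [image_image, ← homothety_mul_apply]
    · exact hs.homothety_image_subset (by positivity) (mul_inv_cancel₀ ha.ne').le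
    · have hb := ha.trans_le hab
      exact ht.homothety_image_subset (by positivity) (mul_inv_le_one_of_le₀ hab hb.le)
  have hnull := measure_mono_null himage hst
  rw [addHaar_image_homothety, mul_eq_zero] at hnull
  exact hnull.resolve_left (by simp [ha.ne'])

theorem card_le_inv_pow_finrank_of_pairwise_aedisjoint {ι : Type*} {F : Finset ι}
    {S : ι → Set E} {v : E} {c : ℝ} (hc : 0 < c) (hconv : ∀ i ∈ F, Convex ℝ (S i))
    (hbdd : ∀ i ∈ F, Bornology.IsBounded (S i)) (hv : ∀ i ∈ F, v ∈ S i)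
    (hdiam : ∀ i ∈ F, 0 < diam (S i))
    (hball : ∀ i ∈ F, ∃ x, closedBall x (c * diam (S i)) ⊆ S i)
    (hdisj : (F : Set ι).Pairwise (AEDisjoint μ on S)) :
    (F.card : ℝ) ≤ c⁻¹ ^ finrank ℝ E := by
  set T : ι → Set E := fun i => homothety v (diam (S i))⁻¹ '' S i
  have hT_subset : ∀ i ∈ F, T i ⊆ closedBall v 1 := fun i hi =>
    homothety_inv_image_subset_closedBall (hdiam i hi) fun _ hx =>
      mem_closedBall.2 (dist_le_diam_of_mem (hbdd i hi) hx (hv i hi))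
  have hT_ge : ∀ i ∈ F, ENNReal.ofReal (c ^ finrank ℝ E) * μ (closedBall 0 1) ≤ μ (T i) :=
    fun i hi => (hball i hi).elim fun _ hx =>
      ofReal_pow_mul_addHaar_closedBall_le_addHaar_homothety_inv_image μ hc.le (hdiam i hi) hx
  have hT_disj : (F : Set ι).Pairwise (AEDisjoint μ on T) := by
    intro i hi j hj hij
    have hsi := (hconv i hi).starConvex (hv i hi)
    have hsj := (hconv j hj).starConvex (hv j hj)
    rcases le_total (diam (S i)) (diam (S j)) with h | h
    · exact aedisjoint_homothety_inv_image μ hsi hsj (hdisj hi hj hij) (hdiam i hi) h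
    · exact (aedisjoint_homothety_inv_image μ hsj hsi (hdisj hj hi hij.symm) (hdiam j hj)
        h).symm
  have hT_meas : ∀ i ∈ F, NullMeasurableSet (T i) μ := fun i hi =>
    ((hconv i hi).affine_image _).nullMeasurableSet μ
  have hvolume :
      (F.card : ℝ≥0∞) * ENNReal.ofReal (c ^ finrank ℝ E) * μ (closedBall 0 1) ≤
        1 * μ (closedBall 0 1) :=
    calc (F.card : ℝ≥0∞) * ENNReal.ofReal (c ^ finrank ℝ E) * μ (closedBall 0 1)
        = ∑ _i ∈ F, ENNReal.ofReal (c ^ finrank ℝ E) * μ (closedBall 0 1) := by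
          rw [Finset.sum_const, nsmul_eq_mul, mul_assoc]
      _ ≤ ∑ i ∈ F, μ (T i) := Finset.sum_le_sum hT_ge
      _ = μ (⋃ i ∈ F, T i) := (measure_biUnion_finset₀ hT_disj hT_meas).symm
      _ ≤ μ (closedBall v 1) := measure_mono (iUnion₂_subset hT_subset)
      _ = 1 * μ (closedBall 0 1) := by
          rw [addHaar_closedBall' μ v zero_le_one, one_pow, ENNReal.ofReal_one]
  have hcard : (F.card : ℝ) * c ^ finrank ℝ E ≤ 1 := by
    rwa [ENNReal.mul_le_mul_iff_left (measure_closedBall_pos μ 0 one_pos).ne'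
      measure_closedBall_lt_top.ne, ← ENNReal.ofReal_natCast,
      ← ENNReal.ofReal_mul (Nat.cast_nonneg _), ENNReal.ofReal_le_one] at hvolume
  rwa [inv_pow, ← one_div, le_div_iff₀ (by positivity)]

theorem aedisjoint_convexHull_of_ne [DecidableEq E] {σ τ : Finset E} (hne : σ ≠ τ)
    (hσ : σ.card = finrank ℝ E + 1) (hτ : τ.card = finrank ℝ E + 1)
    (hinter : convexHull ℝ ↑σ ∩ convexHull ℝ ↑τ = convexHull ℝ (↑(σ ∩ τ) : Set E)) :
    AEDisjoint μ (convexHull ℝ (σ : Set E)) (convexHull ℝ ↑τ) := by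
  have hcard : (σ ∩ τ).card < σ.card := by
    refine Finset.card_lt_card (Finset.inter_subset_left.ssubset_of_ne fun h => hne ?_)
    exact Finset.eq_of_subset_of_card_le (h ▸ Finset.inter_subset_right) (by omega)
  rw [AEDisjoint, hinter]
  exact addHaar_convexHull_eq_zero μ (by omega)

end Packing

theorem exists_closedBall_subset_of_lt_inradius {n : ℕ} {s : Set (EuclideanSpace ℝ (Fin n))}
    {r : ℝ} (hr : r < inradius s) : ∃ x, closedBall x r ⊆ s := by
  rcases eq_empty_or_nonempty {r : ℝ | 0 ≤ r ∧ ∃ x, closedBall x r ⊆ s} with hempty | hne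
  · rw [inradius, hempty, Real.sSup_empty] at hr
    exact ⟨0, by rw [closedBall_eq_empty.2 hr]; exact empty_subset s⟩
  · obtain ⟨r', ⟨-, x, hx⟩, hrr'⟩ := exists_lt_of_lt_csSup hne hr
    exact ⟨x, (closedBall_subset_closedBall hrr'.le).trans hx⟩

/- The inradius is a supremum that need not be attained, so the radius `diam s / C` is halved
to get strictly below it. -/
theorem exists_closedBall_subset_of_diam_le_mul_inradius {n : ℕ}
    {s : Set (EuclideanSpace ℝ (Fin n))} {C : ℝ} (hC : 0 < C) (hs : 0 < diam s)
    (hreg : diam s ≤ C * inradius s) : ∃ x, closedBall x ((2 * C)⁻¹ * diam s) ⊆ s := by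
  refine exists_closedBall_subset_of_lt_inradius ?_
  calc (2 * C)⁻¹ * diam s < C⁻¹ * diam s := by gcongr; linarith
    _ ≤ inradius s := by rwa [inv_mul_le_iff₀ hC]

theorem Finset.card_filter_mem_le_one {α : Type*} [DecidableEq α] [Subsingleton α]
    (K : Finset (Finset α)) (v : α) : (K.filter (v ∈ ·)).card ≤ 1 := by
  have hsingleton : ∀ σ ∈ K.filter (v ∈ ·), σ = {v} := fun σ hσ =>
    Finset.eq_singleton_iff_unique_mem.2
      ⟨(Finset.mem_filter.1 hσ).2, fun x _ => Subsingleton.elim x v⟩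
  exact Finset.card_le_one.2 fun σ hσ τ hτ => (hsingleton σ hσ).trans (hsingleton τ hτ).symm

/-- in a simplicial n-complex in ℝⁿ whose n-simplices are shape regular
(diam σ ≤ C·γ_σ), the number of n-simplices containing a given vertex is bounded by a
constant depending only on n and C. -/
theorem stmt_0 (n : ℕ) (C : ℝ) (hC : 0 < C) :
    ∃ N : ℕ, ∀ K : Finset (Finset (EuclideanSpace ℝ (Fin n))),
      (∀ σ ∈ K, σ.card = n + 1) →
      (∀ σ ∈ K, AffineIndependent ℝ (fun v : σ => (v : EuclideanSpace ℝ (Fin n)))) →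
      (∀ σ ∈ K, Metric.diam (convexHull ℝ (σ : Set (EuclideanSpace ℝ (Fin n)))) ≤
        C * inradius (convexHull ℝ (σ : Set (EuclideanSpace ℝ (Fin n))))) →
      (∀ σ ∈ K, ∀ τ ∈ K,
        convexHull ℝ (σ : Set (EuclideanSpace ℝ (Fin n))) ∩
            convexHull ℝ (τ : Set (EuclideanSpace ℝ (Fin n))) =
          convexHull ℝ ((σ ∩ τ : Finset (EuclideanSpace ℝ (Fin n))) :
            Set (EuclideanSpace ℝ (Fin n)))) →
      ∀ v : EuclideanSpace ℝ (Fin n), (K.filter fun σ => v ∈ σ).card ≤ N := by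
  refine ⟨⌈(2 * C) ^ n⌉₊, fun K hcard _ hreg hinter v => ?_⟩
  rcases Nat.eq_zero_or_pos n with rfl | hn
  · simpa using K.card_filter_mem_le_one v
  have hrank : finrank ℝ (EuclideanSpace ℝ (Fin n)) = n := finrank_euclideanSpace_fin
  have hK : ∀ σ ∈ K.filter (v ∈ ·), σ ∈ K := fun σ hσ => (Finset.mem_filter.1 hσ).1
  have hdiam : ∀ σ ∈ K, 0 < diam (convexHull ℝ (σ : Set (EuclideanSpace ℝ (Fin n)))) :=
    fun σ hσ => diam_convexHull_pos (by rw [hcard σ hσ]; omega)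
  have hcount := card_le_inv_pow_finrank_of_pairwise_aedisjoint volume
    (F := K.filter (v ∈ ·)) (S := fun σ => convexHull ℝ (σ : Set (EuclideanSpace ℝ (Fin n))))
    (c := (2 * C)⁻¹) (by positivity) (fun σ _ => convex_convexHull ℝ _)
    (fun σ _ => isBounded_convexHull.2 σ.finite_toSet.isBounded)
    (fun σ hσ => subset_convexHull ℝ _ (Finset.mem_filter.1 hσ).2)
    (fun σ hσ => hdiam σ (hK σ hσ))
    (fun σ hσ => exists_closedBall_subset_of_diam_le_mul_inradius hC (hdiam σ (hK σ hσ))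
      (hreg σ (hK σ hσ)))
    (fun σ hσ τ hτ hne => aedisjoint_convexHull_of_ne volume hne
      ((hcard σ (hK σ hσ)).trans (by rw [hrank]))
      ((hcard τ (hK τ hτ)).trans (by rw [hrank]))
      (hinter σ (hK σ hσ) τ (hK τ hτ)))
  rw [inv_inv, hrank] at hcount
  exact_mod_cast hcount.trans (Nat.le_ceil _)
end

section
/- Let σ be a nondegenerate n-simplex in ℝⁿ with inradius γ and let v be a vertex of σ. Then the solid angle of σ at v, measured as the (n−1)-dimensional surface measure of the radial projection of σ onto the unit sphere centered at v, is bounded below by a positive constant depending only on n and the ratio diam(σ)/γ. -/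
/-!
The simplex contains a ball of radius `γ` whose centre `c` lies within distance `ρ γ` of the
vertex `v`. If `u` is the unit vector from `v` towards `c`, every unit vector `x` with
`‖x - u‖ ≤ 1 / ρ` gives a point `v + ‖c - v‖ • x` of that ball, so the solid angle at `v` contains
a spherical cap of chordal radius `δ = min (1 / ρ) 2`. Rotating the cap to the first basis vector
and dropping the first coordinate, a 1-Lipschitz map, sends it onto a set containing a cube of
side `δ / √n` in `ℝⁿ⁻¹`, whose Lebesgue measure is the lower bound.
-/

open MeasureTheory Metric

lemma LipschitzWith.fin_tail {α : Type*} [PseudoEMetricSpace α] (m : ℕ) :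
    LipschitzWith 1 (Fin.tail : (Fin (m + 1) → α) → Fin m → α) :=
  LipschitzWith.of_edist_le fun f g => edist_pi_le_iff.2 fun j => edist_le_pi_edist f g j.succ

lemma exists_sphere_inter_closedBall_subset_solidAngle {E : Type*} [NormedAddCommGroup E]
    [NormedSpace ℝ E] [Nontrivial E] {K : Set E} {w c : E} {γ δ : ℝ} (hγ : 0 < γ)
    (hK : closedBall c γ ⊆ K) (hδ : δ * dist w c ≤ γ) :
    ∃ u : E, ‖u‖ = 1 ∧
      sphere 0 1 ∩ closedBall u δ ⊆ {x ∈ sphere (0 : E) 1 | ∃ t : ℝ, 0 < t ∧ w + t • x ∈ K} := by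
  rcases eq_or_ne w c with rfl | hwc
  · obtain ⟨u, hu⟩ := exists_norm_eq E zero_le_one
    refine ⟨u, hu, fun x hx => ⟨hx.1, γ, hγ, hK ?_⟩⟩
    rw [mem_closedBall, dist_eq_norm, add_sub_cancel_left, norm_smul,
      mem_sphere_zero_iff_norm.1 hx.1, Real.norm_of_nonneg hγ.le, mul_one]
  · set d := dist w c
    have hd : 0 < d := dist_pos.2 hwc
    have hcw : ‖c - w‖ = d := by rw [← dist_eq_norm, dist_comm]
    refine ⟨d⁻¹ • (c - w), ?_, ?_⟩
    · rw [norm_smul, hcw, Real.norm_of_nonneg (inv_nonneg.2 hd.le), inv_mul_cancel₀ hd.ne']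
    rintro x ⟨hx, hxu⟩
    refine ⟨hx, d, hd, hK ?_⟩
    have hshift : w + d • x - c = d • (x - d⁻¹ • (c - w)) := by
      rw [smul_sub, smul_inv_smul₀ hd.ne']
      abel
    rw [mem_closedBall, dist_eq_norm, hshift, norm_smul, Real.norm_of_nonneg hd.le,
      ← dist_eq_norm]
    calc d * dist x (d⁻¹ • (c - w)) ≤ d * δ := mul_le_mul_of_nonneg_left hxu hd.le
      _ ≤ γ := by linarith

lemma hausdorffMeasure_sphere_inter_closedBall_eq {F : Type*} [NormedAddCommGroup F]
    [InnerProductSpace ℝ F] [MeasurableSpace F] [BorelSpace F] {u u' : F} (h : ‖u‖ = ‖u'‖)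
    (d r δ : ℝ) :
    μH[d] (sphere 0 r ∩ closedBall u δ) = μH[d] (sphere 0 r ∩ closedBall u' δ) := by
  set R := (Submodule.reflection (ℝ ∙ (u - u'))ᗮ).toIsometryEquiv
  have hRu : R u = u' := Submodule.reflection_sub h
  have hR : R '' (sphere 0 r ∩ closedBall u δ) = sphere 0 r ∩ closedBall u' δ := by
    rw [Set.image_inter R.injective, R.image_sphere, R.image_closedBall, hRu]
    simp [R]
  rw [← hR, R.isometry.hausdorffMeasure_image (Or.inr R.surjective)]

lemma exists_norm_eq_one_fin_tail_eq {m : ℕ} (y : Fin m → ℝ) (hy : ∑ j, y j ^ 2 ≤ 1) :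
    ∃ x : EuclideanSpace ℝ (Fin (m + 1)), ‖x‖ = 1 ∧
      ‖x - EuclideanSpace.single 0 1‖ ^ 2 ≤ 2 * ∑ j, y j ^ 2 ∧ Fin.tail x.ofLp = y := by
  set S := ∑ j, y j ^ 2
  set a := √(1 - S)
  have ha : a ^ 2 = 1 - S := Real.sq_sqrt (by linarith)
  have ha0 : 0 ≤ a := Real.sqrt_nonneg _
  have hS0 : 0 ≤ S := by positivity
  have hnorm (b : ℝ) :
      ‖(WithLp.toLp 2 (Fin.cons b y) : EuclideanSpace ℝ (Fin (m + 1)))‖ ^ 2 = b ^ 2 + S := by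
    simp [EuclideanSpace.norm_sq_eq, Fin.sum_univ_succ, S]
  refine ⟨WithLp.toLp 2 (Fin.cons a y), ?_, ?_, rfl⟩
  · rw [← sq_eq_sq₀ (norm_nonneg _) zero_le_one, hnorm]
    linarith
  · have hsub : WithLp.toLp 2 (Fin.cons a y) - EuclideanSpace.single 0 1 =
        (WithLp.toLp 2 (Fin.cons (a - 1) y) : EuclideanSpace ℝ (Fin (m + 1))) := by
      ext i
      cases i using Fin.cases <;> simp
    rw [hsub, hnorm]
    nlinarith [mul_nonneg ha0 ha0]

lemma ofReal_le_hausdorffMeasure_sphere_inter_closedBall_single {m : ℕ} {δ : ℝ} (hδ0 : 0 ≤ δ)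
    (hδ2 : δ ≤ 2) :
    ENNReal.ofReal ((δ / √(m + 1)) ^ m) ≤
      μH[m] (sphere (0 : EuclideanSpace ℝ (Fin (m + 1))) 1 ∩
        closedBall (EuclideanSpace.single 0 1) δ) := by
  set cap := sphere (0 : EuclideanSpace ℝ (Fin (m + 1))) 1 ∩
    closedBall (EuclideanSpace.single 0 1) δ
  set c := δ / (2 * √(m + 1))
  have hc0 : 0 ≤ c := by positivity
  have hc : m * c ^ 2 ≤ δ ^ 2 / 4 := by
    have hsq : √((m : ℝ) + 1) ^ 2 = m + 1 := Real.sq_sqrt (by positivity)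
    rw [div_pow, mul_pow, hsq, mul_div, div_le_div_iff₀ (by positivity) (by norm_num)]
    nlinarith [sq_nonneg δ]
  have hcube : Set.univ.pi (fun _ => Set.Icc (-c) c) ⊆ (Fin.tail ∘ WithLp.ofLp) '' cap := by
    intro y hy
    have hS : ∑ j, y j ^ 2 ≤ δ ^ 2 / 4 := calc
      ∑ j, y j ^ 2 ≤ ∑ _j : Fin m, c ^ 2 :=
        Finset.sum_le_sum fun j _ => sq_le_sq' (hy j trivial).1 (hy j trivial).2
      _ = m * c ^ 2 := by simp
      _ ≤ δ ^ 2 / 4 := hc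
    obtain ⟨x, hx1, hxδ, rfl⟩ := exists_norm_eq_one_fin_tail_eq y (by nlinarith)
    refine ⟨x, ⟨mem_sphere_zero_iff_norm.2 hx1, ?_⟩, rfl⟩
    rw [mem_closedBall, dist_eq_norm, ← pow_le_pow_iff_left₀ (norm_nonneg _) hδ0 two_ne_zero]
    nlinarith
  calc ENNReal.ofReal ((δ / √(m + 1)) ^ m)
      = volume (Set.univ.pi fun _ : Fin m => Set.Icc (-c) c) := by
        rw [volume_pi_pi]
        simp only [Real.volume_Icc, Finset.prod_const, Finset.card_univ, Fintype.card_fin]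
        rw [← ENNReal.ofReal_pow (by linarith)]
        congr 2
        ring
    _ = μH[m] (Set.univ.pi fun _ : Fin m => Set.Icc (-c) c) := by
        rw [← hausdorffMeasure_pi_real, Fintype.card_fin]
    _ ≤ μH[m] ((Fin.tail ∘ WithLp.ofLp) '' cap) := measure_mono hcube
    _ ≤ μH[m] cap := by
        simpa using ((LipschitzWith.fin_tail m).comp (PiLp.lipschitzWith_ofLp 2 _))
          |>.hausdorffMeasure_image_le (Nat.cast_nonneg m) cap

/-- the solid angle of a nondegenerate n-simplex at any of its vertices,
measured as the (n−1)-dimensional Hausdorff measure of the radial projection of the simplex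
onto the unit sphere centered at the vertex, is bounded below by a positive constant
depending only on n and the shape-regularity ratio diam(σ)/γ. -/
theorem stmt_1 (n : ℕ) (hn : 1 ≤ n) (ρ : ℝ) (hρ : 0 < ρ) :
    ∃ ε : ℝ, 0 < ε ∧
      ∀ v : Fin (n + 1) → EuclideanSpace ℝ (Fin n), AffineIndependent ℝ v →
      ∀ γ : ℝ, 0 < γ →
      (∃ x, Metric.closedBall x γ ⊆ convexHull ℝ (Set.range v)) →
      Metric.diam (convexHull ℝ (Set.range v)) ≤ ρ * γ →
      ∀ i : Fin (n + 1),
        ENNReal.ofReal ε ≤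
          μH[(n : ℝ) - 1] {x ∈ Metric.sphere (0 : EuclideanSpace ℝ (Fin n)) 1 |
            ∃ t : ℝ, 0 < t ∧ v i + t • x ∈ convexHull ℝ (Set.range v)} := by
  obtain ⟨m, rfl⟩ : ∃ m, n = m + 1 := ⟨n - 1, by omega⟩
  set δ := min ρ⁻¹ 2
  have hδ0 : 0 < δ := lt_min (inv_pos.2 hρ) two_pos
  refine ⟨(δ / √(m + 1)) ^ m, by positivity, ?_⟩
  rintro v - γ hγ ⟨c, hc⟩ hdiam i
  have hvc : dist (v i) c ≤ ρ * γ :=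
    (dist_le_diam_of_mem (isBounded_convexHull.2 (Set.finite_range v).isBounded)
      (subset_convexHull ℝ _ (Set.mem_range_self i)) (hc (mem_closedBall_self hγ.le))).trans hdiam
  obtain ⟨u, hu, hcap⟩ := exists_sphere_inter_closedBall_subset_solidAngle hγ hc <| calc
    δ * dist (v i) c ≤ ρ⁻¹ * (ρ * γ) :=
      mul_le_mul (min_le_left _ _) hvc dist_nonneg (inv_nonneg.2 hρ.le)
    _ = γ := by field_simp
  rw [show ((m + 1 : ℕ) : ℝ) - 1 = m by push_cast; ring]
  calc ENNReal.ofReal ((δ / √(m + 1)) ^ m)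
      ≤ μH[m] (sphere 0 1 ∩ closedBall (EuclideanSpace.single 0 1) δ) :=
        ofReal_le_hausdorffMeasure_sphere_inter_closedBall_single hδ0.le (min_le_right _ _)
    _ = μH[m] (sphere 0 1 ∩ closedBall u δ) :=
        hausdorffMeasure_sphere_inter_closedBall_eq (by simp [hu]) _ _ _
    _ ≤ _ := measure_mono hcap
end

section
/- Let (H, ⟨·,·⟩) be a finite-dimensional real inner product space decomposed as V = g + V₀ for a subspace V₀ (affine constraint from inhomogeneous boundary data), and let d be a linear map with ‖v‖ ≤ C‖d v‖ for v ∈ V₀. If u ∈ V₀ satisfies ⟨d u, d ν⟩ = ⟨f, ν⟩ − ⟨d g, d ν⟩ for all ν ∈ V₀, then ‖u‖ ≤ C²‖f‖ + C‖d g‖. -/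
open scoped RealInnerProductSpace

/-- stability for the inhomogeneous discrete Dirichlet problem. -/
theorem stmt_8 {H W : Type*} [NormedAddCommGroup H] [InnerProductSpace ℝ H]
    [NormedAddCommGroup W] [InnerProductSpace ℝ W]
    [FiniteDimensional ℝ H] [FiniteDimensional ℝ W]
    (V₀ : Submodule ℝ H) (d : H →ₗ[ℝ] W) (C : ℝ) (hC : 0 < C)
    (hP : ∀ v ∈ V₀, ‖v‖ ≤ C * ‖d v‖)
    (f g u : H) (hu : u ∈ V₀)
    (heq : ∀ ν ∈ V₀, ⟪d u, d ν⟫ = ⟪f, ν⟫ - ⟪d g, d ν⟫) :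
    ‖u‖ ≤ C ^ 2 * ‖f‖ + C * ‖d g‖ := by
  have hud : ‖u‖ ≤ C * ‖d u‖ := hP u hu
  have key : ‖d u‖ ≤ C * ‖f‖ + ‖d g‖ := by
    rcases eq_or_ne (d u) 0 with h0 | h0
    · rw [h0, norm_zero]
      positivity
    · have hpos : 0 < ‖d u‖ := norm_pos_iff.mpr h0
      have h1 : ‖d u‖ ^ 2 = ⟪f, u⟫ - ⟪d g, d u⟫ := by
        rw [← heq u hu, real_inner_self_eq_norm_sq]
      have h2 : ‖d u‖ ^ 2 ≤ ‖f‖ * ‖u‖ + ‖d g‖ * ‖d u‖ := by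
        rw [h1]
        have := abs_real_inner_le_norm f u
        have := abs_real_inner_le_norm (d g) (d u)
        have := abs_le.mp (abs_real_inner_le_norm f u)
        have := abs_le.mp (abs_real_inner_le_norm (d g) (d u))
        nlinarith [abs_le.mp (abs_real_inner_le_norm f u),
          abs_le.mp (abs_real_inner_le_norm (d g) (d u))]
      have h3 : ‖d u‖ ^ 2 ≤ (C * ‖f‖ + ‖d g‖) * ‖d u‖ := by
        nlinarith [norm_nonneg f, norm_nonneg (d g)]
      nlinarith
  calc ‖u‖ ≤ C * ‖d u‖ := hud
    _ ≤ C * (C * ‖f‖ + ‖d g‖) := by nlinarith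
    _ = C ^ 2 * ‖f‖ + C * ‖d g‖ := by ring
end
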